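/- arXiv:2305.07808 — 4 statements merged into one kernel-verified Lean document; each statement's English description precedes it below -/
import Mathlib

section
/- Let S be a collection of nonempty finite sets each of cardinality 2 or 3. In the conflict graph G_S, every induced 3-claw is centered at a vertex corresponding to a set of cardinality 3. Equivalently, a vertex corresponding to a 2-element set has at most 2 pairwise non-adjacent neighbors. -/
/-!
Each of the three talons meets the 2-element centre, and distinct talons are disjoint, so they
meet it in distinct points: three points in a 2-element set, which is absurd.
-/

theorem Finset.card_le_card_of_pairwiseDisjoint_of_inter_nonempty {α : Type*} [DecidableEq α]
    {T : Finset (Finset α)} {c : Finset α} (hT : (T : Set (Finset α)).PairwiseDisjoint id)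
    (hmeet : ∀ t ∈ T, (t ∩ c).Nonempty) : T.card ≤ c.card := by
  refine Finset.card_le_card_of_forall_subsingleton (fun t a => a ∈ t) ?_ ?_
  · intro t ht
    obtain ⟨a, ha⟩ := hmeet t ht
    exact ⟨a, (Finset.mem_inter.mp ha).2, (Finset.mem_inter.mp ha).1⟩
  · intro a _ t₁ ⟨ht₁, ha₁⟩ t₂ ⟨ht₂, ha₂⟩
    by_contra hne
    exact Finset.disjoint_left.mp (hT ht₁ ht₂ hne) ha₁ ha₂

theorem conflict_graph_three_claw_center_general {α : Type*} [DecidableEq α]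
    (S : Finset (Finset α)) :
    ¬ ∃ c ∈ S, c.card = 2 ∧ ∃ T : Finset (Finset α), T ⊆ S ∧ T.card = 3 ∧ c ∉ T ∧
      (∀ t ∈ T, (t ∩ c).Nonempty) ∧
      (∀ t₁ ∈ T, ∀ t₂ ∈ T, t₁ ≠ t₂ → ¬ (t₁ ∩ t₂).Nonempty) := by
  rintro ⟨c, -, hc, T, -, hT, -, hmeet, hdisj⟩
  have hT_disjoint : (T : Set (Finset α)).PairwiseDisjoint id := fun t₁ h₁ t₂ h₂ hne =>
    Finset.disjoint_iff_inter_eq_empty.mpr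
      (Finset.not_nonempty_iff_eq_empty.mp (hdisj t₁ h₁ t₂ h₂ hne))
  have hT_le_c := Finset.card_le_card_of_pairwiseDisjoint_of_inter_nonempty hT_disjoint hmeet
  omega

/-- Let `S` be a collection of nonempty finite sets, each of cardinality
2 or 3. In the conflict graph of `S`, every induced 3-claw is centered at a set of
cardinality 3; equivalently, a 2-element set has no 3 pairwise non-adjacent neighbors. -/
theorem conflict_graph_three_claw_center {α : Type*} [DecidableEq α]
    (S : Finset (Finset α))
    (hcard : ∀ s ∈ S, s.card = 2 ∨ s.card = 3) :
    ¬ ∃ c ∈ S, c.card = 2 ∧ ∃ T : Finset (Finset α), T ⊆ S ∧ T.card = 3 ∧ c ∉ T ∧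
      (∀ t ∈ T, (t ∩ c).Nonempty) ∧
      (∀ t₁ ∈ T, ∀ t₂ ∈ T, t₁ ≠ t₂ → ¬ (t₁ ∩ t₂).Nonempty) :=
  conflict_graph_three_claw_center_general S
end

section
/- Let B be a minimal binocular in a multigraph G. Then either (a) there exist (not necessarily distinct) vertices u, v, cycles C_u through u and C_v through v of positive length, and a u-v-path P such that E(B) is the disjoint union of E(C_u), E(C_v), and E(P); or (b) there exist two distinct vertices u and v such that E(B) is the union of the edge sets of three pairwise edge-disjoint u-v-paths. -/
/-- A multigraph on vertex type `V` with edge type `E`. -/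
structure Multigraph (V E : Type*) where
  ends : E → Sym2 V

namespace Multigraph

variable {V E : Type*}

def IsSubgraph (G : Multigraph V E) (S : Finset V) (F : Finset E) : Prop :=
  ∀ e ∈ F, ∀ v ∈ G.ends e, v ∈ S

def IsBinocular (G : Multigraph V E) (S : Finset V) (F : Finset E) : Prop :=
  G.IsSubgraph S F ∧ S.card < F.card

def IsMinimalBinocular (G : Multigraph V E) (S : Finset V) (F : Finset E) : Prop :=
  G.IsBinocular S F ∧
    ∀ S' F', S' ⊆ S → F' ⊆ F → G.IsBinocular S' F' → S' = S ∧ F' = F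

/-- A walk from `u` to `v`, given by its vertex sequence and edge sequence. -/
structure Walk (G : Multigraph V E) (u v : V) where
  verts : List V
  edges : List E
  len_eq : verts.length = edges.length + 1
  head_eq : verts.head? = some u
  last_eq : verts.getLast? = some v
  valid : ∀ i (h : i < edges.length),
    G.ends (edges[i]'h) = s(verts[i]'(by omega), verts[i + 1]'(by omega))

/-- A walk is a (vertex-simple) path if its vertices are pairwise distinct. -/
def Walk.IsPath {G : Multigraph V E} {u v : V} (p : G.Walk u v) : Prop :=
  p.verts.Nodup

/-- A closed walk is a cycle (of positive length) if it is nonempty and all its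
vertices except the repeated endpoint are pairwise distinct.  This includes loops
(length 1) and pairs of parallel edges (length 2). -/
def Walk.IsCycle {G : Multigraph V E} {u : V} (c : G.Walk u u) : Prop :=
  c.edges ≠ [] ∧ c.verts.dropLast.Nodup

end Multigraph

/-!
A minimal binocular `(S, F)` has `|F| = |S| + 1` and minimum degree at least `2`, so by the
handshake lemma either one vertex has degree `4` or two vertices have degree `3`, all others
having degree `2`. Starting at a vertex of degree `≠ 2` and following edges through vertices of
degree `2` gives a trail ending at a vertex of degree `≠ 2`; removing it keeps every other degree
in `{0, 2}`, so this can be repeated. Three such trails (two if some degree is `4`) form either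
two cycles joined by a path or three paths between the two vertices of degree `3`. Such a
configuration has fewer vertices than edges, so by minimality it uses all of `F`.
-/

namespace Finset

variable {α : Type*} {s : Finset α} {f : α → ℕ} {k : ℕ}

theorem eq_two_of_sum_eq_two_mul_card (h₂ : ∀ a ∈ s, 2 ≤ f a) (hsum : ∑ a ∈ s, f a = 2 * #s) :
    ∀ a ∈ s, f a = 2 := by
  have : ∑ _a ∈ s, 2 = ∑ a ∈ s, f a := by rw [hsum, sum_const, smul_eq_mul, mul_comm]
  exact fun a ha => ((sum_eq_sum_iff_of_le h₂).1 this a ha).symm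

theorem exists_three_le_of_sum_eq [DecidableEq α] (h₂ : ∀ a ∈ s, 2 ≤ f a)
    (hsum : ∑ a ∈ s, f a = 2 * #s + k) (hk : 0 < k) :
    ∃ a ∈ s, 3 ≤ f a ∧ f a ≤ k + 2 ∧ ∑ b ∈ s.erase a, f b = 2 * #(s.erase a) + (k + 2 - f a) := by
  obtain ⟨a, ha, ha₃⟩ := exists_lt_of_sum_lt (f := fun _ => 2) (s := s) (g := f) <| by
    rw [hsum, sum_const, smul_eq_mul]
    omega
  have hrest : #(s.erase a) • 2 ≤ ∑ b ∈ s.erase a, f b :=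
    card_nsmul_le_sum _ _ _ fun b hb => h₂ b (mem_of_mem_erase hb)
  have := sum_erase_add s f ha
  have := card_erase_add_one ha
  rw [smul_eq_mul] at hrest
  exact ⟨a, ha, ha₃, by omega, by omega⟩

end Finset

theorem List.disjoint_of_nodup_append₃ {α : Type*} {l₁ l₂ l₃ : List α}
    (h : (l₁ ++ l₂ ++ l₃).Nodup) : l₁.Disjoint l₂ ∧ l₁.Disjoint l₃ ∧ l₂.Disjoint l₃ :=
  ⟨List.disjoint_of_nodup_append h.of_append_left,
    List.disjoint_append_left.1 (List.disjoint_of_nodup_append h)⟩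

theorem Sym2.count_toMultiset_mk {α : Type*} [DecidableEq α] (a b x : α) :
    s(a, b).toMultiset.count x = (if a = x then 1 else 0) + (if b = x then 1 else 0) := by
  simp [Sym2.toMultiset, List.count_cons, add_comm]

theorem Sym2.count_toMultiset_pos {α : Type*} [DecidableEq α] {z : Sym2 α} {x : α} :
    0 < z.toMultiset.count x ↔ x ∈ z := by
  rw [Multiset.count_pos, Sym2.mem_toMultiset]

namespace Multigraph

variable {V E : Type*} {G : Multigraph V E}

namespace Walk

variable {u v w : V} {e : E}

theorem verts_ne_nil (p : G.Walk u v) : p.verts ≠ [] := by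
  intro h
  simpa [h] using p.len_eq

def nil (G : Multigraph V E) (v : V) : G.Walk v v where
  verts := [v]
  edges := []
  len_eq := rfl
  head_eq := rfl
  last_eq := rfl
  valid i h := absurd h (Nat.not_lt_zero i)

def cons (e : E) (h : G.ends e = s(u, w)) (p : G.Walk w v) : G.Walk u v where
  verts := u :: p.verts
  edges := e :: p.edges
  len_eq := by simp [p.len_eq]
  head_eq := rfl
  last_eq := by
    obtain ⟨a, t, hat⟩ := List.exists_cons_of_ne_nil p.verts_ne_nil
    simpa [hat] using p.last_eq
  valid i hi := by
    cases i with
    | zero =>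
      obtain ⟨a, t, hat⟩ := List.exists_cons_of_ne_nil p.verts_ne_nil
      have : a = w := by simpa [hat] using p.head_eq
      simp [h, hat, this]
    | succ j => simpa using p.valid j (by simpa using hi)

@[simp] theorem nil_verts : (nil G v).verts = [v] := rfl

@[simp] theorem nil_edges : (nil G v).edges = [] := rfl

@[simp] theorem cons_verts (h : G.ends e = s(u, w)) (p : G.Walk w v) :
    (cons e h p).verts = u :: p.verts := rfl

@[simp] theorem cons_edges (h : G.ends e = s(u, w)) (p : G.Walk w v) :
    (cons e h p).edges = e :: p.edges := rfl

def innerVerts (p : G.Walk u v) : List V :=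
  p.verts.tail.dropLast

theorem eq_of_edges_eq_nil (p : G.Walk u v) (h : p.edges = []) : u = v := by
  obtain ⟨a, t, hat⟩ := List.exists_cons_of_ne_nil p.verts_ne_nil
  have := p.len_eq
  have := p.head_eq
  have := p.last_eq
  simp_all

theorem length_pos_of_ne (p : G.Walk u v) (huv : u ≠ v) : 0 < p.edges.length :=
  List.length_pos_iff.2 fun h => huv (p.eq_of_edges_eq_nil h)

theorem verts_eq_of_edges_ne_nil (p : G.Walk u v) (h : p.edges ≠ []) :
    p.verts = u :: (p.innerVerts ++ [v]) := by
  obtain ⟨a, t, hat⟩ := List.exists_cons_of_ne_nil p.verts_ne_nil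
  have ht : t ≠ [] := by
    rintro rfl
    exact h (List.length_eq_zero_iff.1 (by simpa [hat] using p.len_eq))
  have ha : a = u := by simpa [hat] using p.head_eq
  have hv : t.getLast ht = v := by
    have := p.last_eq
    simpa [hat, List.getLast?_cons, List.getLast?_eq_some_getLast ht] using this
  rw [innerVerts, hat, List.tail_cons, ha, ← hv, List.dropLast_append_getLast]

theorem length_innerVerts (p : G.Walk u v) : p.innerVerts.length = p.edges.length - 1 := by
  simp [innerVerts, p.len_eq]

theorem mem_verts (p : G.Walk u v) (hw : w ∈ p.verts) : w = u ∨ w = v ∨ w ∈ p.innerVerts := by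
  by_cases h : p.edges = []
  · obtain rfl := p.eq_of_edges_eq_nil h
    have : p.verts.length = 1 := by simp [p.len_eq, h]
    obtain ⟨a, ha⟩ := List.length_eq_one_iff.1 this
    have := p.head_eq
    simp_all
  · rw [p.verts_eq_of_edges_ne_nil h] at hw
    simp only [List.mem_cons, List.mem_append] at hw
    tauto

theorem mem_verts_of_mem_ends (p : G.Walk u v) (he : e ∈ p.edges) (hw : w ∈ G.ends e) :
    w ∈ p.verts := by
  obtain ⟨i, hi, rfl⟩ := List.mem_iff_getElem.1 he
  rw [p.valid i hi, Sym2.mem_iff] at hw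
  rcases hw with rfl | rfl <;> exact List.getElem_mem _

theorem innerVerts_cons (h : G.ends e = s(u, w)) (p : G.Walk w v) (hp : p.edges ≠ []) :
    (cons e h p).innerVerts = w :: p.innerVerts := by
  rw [innerVerts, cons_verts, List.tail_cons, p.verts_eq_of_edges_ne_nil hp, ← List.cons_append,
    List.dropLast_concat]

theorem innerVerts_cons_nil (h : G.ends e = s(u, w)) : (cons e h (nil G w)).innerVerts = [] :=
  rfl

theorem isPath_nil : (nil G v).IsPath := List.nodup_singleton v

theorem isPath_of_innerVerts (p : G.Walk u v) (huv : u ≠ v) (hu : u ∉ p.innerVerts)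
    (hv : v ∉ p.innerVerts) (h : p.innerVerts.Nodup) : p.IsPath := by
  rw [IsPath, p.verts_eq_of_edges_ne_nil fun hp => huv (p.eq_of_edges_eq_nil hp)]
  simp only [List.nodup_cons, List.mem_append, List.mem_singleton, not_or, List.nodup_append]
  exact ⟨⟨hu, huv⟩, h, by simp, fun a ha b hb hab => hv (by simp_all)⟩

theorem isCycle_of_innerVerts (c : G.Walk u u) (hc : c.edges ≠ []) (hu : u ∉ c.innerVerts)
    (h : c.innerVerts.Nodup) : c.IsCycle := by
  refine ⟨hc, ?_⟩
  rw [c.verts_eq_of_edges_ne_nil hc, ← List.cons_append, List.dropLast_concat]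
  exact List.nodup_cons.2 ⟨hu, h⟩

end Walk

theorem IsSubgraph.mono {S T : Finset V} {A : Finset E} (hST : S ⊆ T) (hA : G.IsSubgraph S A) :
    G.IsSubgraph T A := fun e he w hw => hST (hA e he w hw)

section

variable [DecidableEq E] {F : Finset E}

theorem IsSubgraph.union {S : Finset V} {A B : Finset E} (hA : G.IsSubgraph S A)
    (hB : G.IsSubgraph S B) : G.IsSubgraph S (A ∪ B) := fun e he =>
  (Finset.mem_union.1 he).elim (hA e) (hB e)

def IsEdgeListOf (F : Finset E) (l : List E) : Prop :=
  l.Nodup ∧ l.toFinset ⊆ F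

theorem IsEdgeListOf.append {l₁ l₂ : List E} (h₁ : IsEdgeListOf F l₁)
    (h₂ : IsEdgeListOf (F \ l₁.toFinset) l₂) : IsEdgeListOf F (l₁ ++ l₂) := by
  refine ⟨h₁.1.append h₂.1 fun a ha₁ ha₂ => ?_, ?_⟩
  · exact (Finset.mem_sdiff.1 (h₂.2 (List.mem_toFinset.2 ha₂))).2 (List.mem_toFinset.2 ha₁)
  · rw [List.toFinset_append]
    exact Finset.union_subset h₁.2 (h₂.2.trans Finset.sdiff_subset)

theorem IsEdgeListOf.perm {l₁ l₂ : List E} (h : l₁.Perm l₂) (hl : IsEdgeListOf F l₁) :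
    IsEdgeListOf F l₂ :=
  ⟨h.nodup_iff.1 hl.1, List.toFinset_eq_of_perm _ _ h ▸ hl.2⟩

theorem IsMinimalBinocular.card_edges {S : Finset V} (h : G.IsMinimalBinocular S F) :
    F.card = S.card + 1 := by
  obtain ⟨⟨hsub, hlt⟩, hmin⟩ := h
  obtain ⟨e, he⟩ := Finset.card_pos.1 (by omega : 0 < F.card)
  by_contra hne
  have := hmin S (F.erase e) subset_rfl (Finset.erase_subset e F)
    ⟨fun f hf => hsub f (Finset.mem_of_mem_erase hf), by rw [Finset.card_erase_of_mem he]; omega⟩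
  exact Finset.notMem_erase e F (by rw [this.2]; exact he)

end

section

variable [DecidableEq V] {S D : Finset V} {F : Finset E} {v : V}

def deg (G : Multigraph V E) (F : Finset E) (v : V) : ℕ :=
  ∑ e ∈ F, (G.ends e).toMultiset.count v

theorem exists_mem_ends_of_deg_pos (h : 0 < G.deg F v) : ∃ e ∈ F, v ∈ G.ends e := by
  obtain ⟨e, he, hpos⟩ := Finset.exists_lt_of_sum_lt (f := fun _ => 0) (by simpa [deg] using h)
  exact ⟨e, he, Sym2.count_toMultiset_pos.1 hpos⟩

theorem card_filter_mem_ends_le_deg (F : Finset E) (v : V) :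
    (F.filter (v ∈ G.ends ·)).card ≤ G.deg F v := by
  rw [Finset.card_eq_sum_ones, Finset.sum_filter]
  exact Finset.sum_le_sum fun e _ => by
    split_ifs with h
    · exact Sym2.count_toMultiset_pos.2 h
    · exact Nat.zero_le _

theorem IsSubgraph.deg_eq_zero (hF : G.IsSubgraph S F) (hv : v ∉ S) : G.deg F v = 0 :=
  Finset.sum_eq_zero fun e he =>
    Multiset.count_eq_zero.2 fun hm => hv (hF e he v (Sym2.mem_toMultiset.1 hm))

theorem IsSubgraph.sum_deg (hF : G.IsSubgraph S F) : ∑ v ∈ S, G.deg F v = 2 * F.card := by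
  simp only [deg]
  rw [Finset.sum_comm, Finset.card_eq_sum_ones, Finset.mul_sum]
  refine Finset.sum_congr rfl fun e he => ?_
  rw [Multiset.sum_count_eq_card fun v hv => hF e he v (Sym2.mem_toMultiset.1 hv),
    Sym2.card_toMultiset, mul_one]

def DegZeroOrTwoOff (G : Multigraph V E) (D : Finset V) (F : Finset E) : Prop :=
  ∀ w ∉ D, G.deg F w = 0 ∨ G.deg F w = 2

theorem IsSubgraph.degZeroOrTwoOff (hF : G.IsSubgraph S F)
    (h : ∀ x ∈ S, x ∉ D → G.deg F x = 2) : G.DegZeroOrTwoOff D F := fun x hx =>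
  if hS : x ∈ S then Or.inr (h x hS hx) else Or.inl (hF.deg_eq_zero hS)

namespace IsMinimalBinocular

-- Otherwise deleting `v` together with its at most one edge leaves a smaller binocular.
theorem two_le_deg (h : G.IsMinimalBinocular S F) (hv : v ∈ S) : 2 ≤ G.deg F v := by
  obtain ⟨⟨hsub, hlt⟩, hmin⟩ := h
  by_contra hlt₂
  have hcard := Finset.card_filter_add_card_filter_not (s := F) (v ∈ G.ends ·)
  have hle := G.card_filter_mem_ends_le_deg F v
  have hS := Finset.card_pos.2 ⟨v, hv⟩
  have := hmin (S.erase v) (F.filter (v ∉ G.ends ·)) (Finset.erase_subset v S)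
    (Finset.filter_subset _ _)
    ⟨fun e he w hw => Finset.mem_erase.2
      ⟨fun hwv => (Finset.mem_filter.1 he).2 (hwv ▸ hw), hsub e (Finset.mem_filter.1 he).1 w hw⟩,
      by rw [Finset.card_erase_of_mem hv]; omega⟩
  exact Finset.notMem_erase v S (by rw [this.1]; exact hv)

theorem eq_of_isSubgraph (h : G.IsMinimalBinocular S F) {K : Finset V} {F' : Finset E}
    (hF' : F' ⊆ F) (hK : G.IsSubgraph K F') (hcard : K.card < F'.card) : F' = F :=
  (h.2 (S ∩ K) F' Finset.inter_subset_left hF'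
    ⟨fun e he w hw => Finset.mem_inter.2 ⟨h.1.1 e (hF' he) w hw, hK e he w hw⟩,
      (Finset.card_le_card Finset.inter_subset_right).trans_lt hcard⟩).2

end IsMinimalBinocular

end

variable [DecidableEq V] [DecidableEq E] {S D : Finset V} {F : Finset E} {x z b : V} {e : E}

theorem deg_erase_add (he : e ∈ F) (v : V) :
    G.deg (F.erase e) v + (G.ends e).toMultiset.count v = G.deg F v :=
  Finset.sum_erase_add _ _ he

theorem Walk.isSubgraph {a b : V} (p : G.Walk a b) {T : Finset V} (ha : a ∈ T) (hb : b ∈ T) :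
    G.IsSubgraph (T ∪ p.innerVerts.toFinset) p.edges.toFinset := fun e he w hw => by
  rcases p.mem_verts (p.mem_verts_of_mem_ends (List.mem_toFinset.1 he) hw) with rfl | rfl | hw
  · exact Finset.mem_union_left _ ha
  · exact Finset.mem_union_left _ hb
  · exact Finset.mem_union_right _ (List.mem_toFinset.2 hw)

theorem IsMinimalBinocular.deg_cases (h : G.IsMinimalBinocular S F) :
    (∃ w, G.deg F w = 4 ∧ G.DegZeroOrTwoOff {w} F) ∨
      ∃ u v, u ≠ v ∧ G.deg F u = 3 ∧ G.deg F v = 3 ∧ G.DegZeroOrTwoOff {u, v} F := by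
  have hsum : ∑ v ∈ S, G.deg F v = 2 * S.card + 2 := by
    rw [h.1.1.sum_deg, h.card_edges]
    ring
  obtain ⟨w, hw, hw₃, hw₄, hrest⟩ :=
    Finset.exists_three_le_of_sum_eq (fun v hv => h.two_le_deg hv) hsum two_pos
  have h₂ : ∀ v ∈ S.erase w, 2 ≤ G.deg F v := fun v hv => h.two_le_deg (Finset.mem_of_mem_erase hv)
  rcases (by omega : G.deg F w = 4 ∨ G.deg F w = 3) with hw₄ | hw₃
  · refine Or.inl ⟨w, hw₄, h.1.1.degZeroOrTwoOff fun v hv hvw => ?_⟩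
    exact Finset.eq_two_of_sum_eq_two_mul_card h₂ (by omega) v
      (Finset.mem_erase.2 ⟨by simpa using hvw, hv⟩)
  · obtain ⟨v, hv, hv₃, hv₃', hrest'⟩ :=
      Finset.exists_three_le_of_sum_eq h₂ (k := 1) (by omega) one_pos
    refine Or.inr ⟨w, v, (Finset.ne_of_mem_erase hv).symm, hw₃, by omega,
      h.1.1.degZeroOrTwoOff fun x hx hxD => ?_⟩
    refine Finset.eq_two_of_sum_eq_two_mul_card (s := (S.erase w).erase v)
      (fun y hy => h₂ y (Finset.mem_of_mem_erase hy)) (by omega) x ?_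
    simp only [Finset.mem_insert, Finset.mem_singleton, not_or] at hxD
    simp [hx, hxD.1, hxD.2]

/-- The last field says that removing `p` from `F` lowers the degrees on `D` exactly as removing
a single edge `xz` would. -/
structure Walk.IsBranch (D : Finset V) (F : Finset E) (p : G.Walk x z) : Prop where
  edges_ne_nil : p.edges ≠ []
  isEdgeListOf : IsEdgeListOf F p.edges
  innerVerts_nodup : p.innerVerts.Nodup
  not_mem_of_mem_innerVerts : ∀ w ∈ p.innerVerts, w ∉ D
  degZeroOrTwoOff : G.DegZeroOrTwoOff D (F \ p.edges.toFinset)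
  deg_sdiff_add :
    ∀ w ∈ D, G.deg (F \ p.edges.toFinset) w + s(x, z).toMultiset.count w = G.deg F w

namespace Walk.IsBranch

theorem isCycle {c : G.Walk x x} (hc : c.IsBranch D F) (hx : x ∈ D) : c.IsCycle :=
  c.isCycle_of_innerVerts hc.edges_ne_nil (fun h => hc.not_mem_of_mem_innerVerts x h hx)
    hc.innerVerts_nodup

theorem isPath {p : G.Walk x z} (hp : p.IsBranch D F) (hx : x ∈ D) (hz : z ∈ D) (hxz : x ≠ z) :
    p.IsPath :=
  p.isPath_of_innerVerts hxz (fun h => hp.not_mem_of_mem_innerVerts x h hx)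
    (fun h => hp.not_mem_of_mem_innerVerts z h hz) hp.innerVerts_nodup

theorem single (hreg : G.DegZeroOrTwoOff D F) (he : e ∈ F) (h : G.ends e = s(x, b))
    (hx : x ∈ D) (hb : b ∈ D) : (Walk.cons e h (nil G b)).IsBranch D F := by
  have hsd : F \ (Walk.cons e h (nil G b)).edges.toFinset = F.erase e := by
    simp [Finset.sdiff_singleton_eq_erase]
  refine ⟨by simp, ⟨by simp, by simpa using he⟩, by simp [innerVerts_cons_nil],
    by simp [innerVerts_cons_nil], fun w hw => ?_, fun w _ => ?_⟩ <;> rw [hsd]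
  · have hxw : x ≠ w := fun hxw => hw (hxw ▸ hx)
    have hbw : b ≠ w := fun hbw => hw (hbw ▸ hb)
    have := G.deg_erase_add he w
    rw [h, Sym2.count_toMultiset_mk, if_neg hxw, if_neg hbw] at this
    have := hreg w hw
    omega
  · simpa [h] using G.deg_erase_add he w

theorem cons {p : G.Walk b z} (he : e ∈ F) (h : G.ends e = s(x, b)) (hx : x ∈ D) (hb : b ∉ D)
    (hb₂ : G.deg F b = 2) (hzb : z ≠ b) (hp : p.IsBranch (insert b D) (F.erase e)) :
    (Walk.cons e h p).IsBranch D F := by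
  have hxb : x ≠ b := fun hxb => hb (hxb ▸ hx)
  have hep : e ∉ p.edges := fun hep =>
    Finset.notMem_erase e F (hp.isEdgeListOf.2 (List.mem_toFinset.2 hep))
  have hsd : F \ (Walk.cons e h p).edges.toFinset = F.erase e \ p.edges.toFinset := by
    rw [cons_edges, List.toFinset_cons, Finset.sdiff_insert, Finset.erase_sdiff_comm]
  have hdeg (w : V) := G.deg_erase_add he w
  rw [h] at hdeg
  refine ⟨by simp, ⟨List.nodup_cons.2 ⟨hep, hp.isEdgeListOf.1⟩, ?_⟩, ?_, ?_, ?_, ?_⟩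
  · rw [cons_edges, List.toFinset_cons]
    exact Finset.insert_subset he (hp.isEdgeListOf.2.trans (Finset.erase_subset e F))
  · rw [innerVerts_cons _ _ hp.edges_ne_nil]
    exact List.nodup_cons.2
      ⟨fun hm => hp.not_mem_of_mem_innerVerts b hm (Finset.mem_insert_self b D),
        hp.innerVerts_nodup⟩
  · intro w hw
    rw [innerVerts_cons _ _ hp.edges_ne_nil] at hw
    rcases List.mem_cons.1 hw with rfl | hw
    · exact hb
    · exact fun hwD => hp.not_mem_of_mem_innerVerts w hw (Finset.mem_insert_of_mem hwD)
  · intro w hw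
    rw [hsd]
    obtain rfl | hwb := eq_or_ne w b
    · have h₁ := hp.deg_sdiff_add w (Finset.mem_insert_self w D)
      have h₂ := hdeg w
      simp only [Sym2.count_toMultiset_mk, if_neg hzb, if_neg hxb, ↓reduceIte] at h₁ h₂
      omega
    · exact hp.degZeroOrTwoOff w (by simp [hwb, hw])
  · intro w hw
    have hwb : b ≠ w := fun hbw => hb (hbw ▸ hw)
    have h₁ := hp.deg_sdiff_add w (Finset.mem_insert_of_mem hw)
    have h₂ := hdeg w
    rw [hsd]
    simp only [Sym2.count_toMultiset_mk, if_neg hwb] at h₁ h₂ ⊢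
    omega

end Walk.IsBranch

theorem DegZeroOrTwoOff.exists_branch {D : Finset V} {F : Finset E} {x : V}
    (hreg : G.DegZeroOrTwoOff D F) (hx : x ∈ D) (hdeg : 0 < G.deg F x) :
    ∃ z ∈ D, ∃ p : G.Walk x z, p.IsBranch D F := by
  obtain ⟨e, he, hxe⟩ := exists_mem_ends_of_deg_pos hdeg
  obtain ⟨b, h⟩ := Sym2.mem_iff_exists.1 hxe
  by_cases hb : b ∈ D
  · exact ⟨b, hb, _, Walk.IsBranch.single hreg he h hx hb⟩
  have hdeg (w : V) := G.deg_erase_add he w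
  rw [h] at hdeg
  have hxb : x ≠ b := fun hxb => hb (hxb ▸ hx)
  have hb₂ : G.deg F b = 2 := by
    have := hdeg b
    simp only [Sym2.count_toMultiset_mk, ↓reduceIte] at this
    exact (hreg b hb).resolve_left (by omega)
  have hreg' : G.DegZeroOrTwoOff (insert b D) (F.erase e) := by
    intro w hw
    rw [Finset.mem_insert, not_or] at hw
    have := hdeg w
    rw [Sym2.count_toMultiset_mk, if_neg fun hxw : x = w => hw.2 (hxw ▸ hx),
      if_neg (Ne.symm hw.1)] at this
    have := hreg w hw.2
    omega
  have hdeg' : G.deg (F.erase e) b = 1 := by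
    have := hdeg b
    simp only [Sym2.count_toMultiset_mk, ↓reduceIte, if_neg hxb] at this
    omega
  obtain ⟨z, hz, p, hp⟩ := hreg'.exists_branch (Finset.mem_insert_self b D) (by omega)
  have hzb : z ≠ b := by
    rintro rfl
    have := hp.deg_sdiff_add z (Finset.mem_insert_self z D)
    simp only [Sym2.count_toMultiset_mk, ↓reduceIte] at this
    omega
  exact ⟨z, (Finset.mem_insert.1 hz).resolve_left hzb, _, hp.cons he h hx hb hb₂ hzb⟩
termination_by F.card
decreasing_by exact Finset.card_erase_lt_of_mem he

theorem DegZeroOrTwoOff.exists_cycle (hreg : G.DegZeroOrTwoOff D F) (hx : x ∈ D)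
    (hdeg : 0 < G.deg F x) (hD : ∀ y ∈ D, y ≠ x → G.deg F y = 0) :
    ∃ c : G.Walk x x, c.IsBranch D F ∧ c.IsCycle := by
  obtain ⟨z, hz, c, hc⟩ := hreg.exists_branch hx hdeg
  obtain rfl : z = x := by
    by_contra hzx
    have := hc.deg_sdiff_add z hz
    simp only [hD z hz hzx, Sym2.count_toMultiset_mk, ↓reduceIte] at this
    omega
  exact ⟨c, hc, hc.isCycle hx⟩

theorem DegZeroOrTwoOff.exists_path (hreg : G.DegZeroOrTwoOff D F) (hx : x ∈ D)
    (hdeg : G.deg F x = 1) : ∃ z ∈ D, z ≠ x ∧ ∃ p : G.Walk x z, p.IsBranch D F ∧ p.IsPath := by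
  obtain ⟨z, hz, p, hp⟩ := hreg.exists_branch hx (by omega)
  have hzx : z ≠ x := by
    rintro rfl
    have := hp.deg_sdiff_add z hz
    simp only [Sym2.count_toMultiset_mk, ↓reduceIte] at this
    omega
  exact ⟨z, hz, hzx, p, hp, hp.isPath hx hz hzx.symm⟩

/-- This includes the figure eight: `u = v` and `p` trivial. -/
def HasDumbbell (G : Multigraph V E) (F : Finset E) : Prop :=
  ∃ (u v : V) (cu : G.Walk u u) (cv : G.Walk v v) (p : G.Walk u v),
    cu.IsCycle ∧ cv.IsCycle ∧ p.IsPath ∧ IsEdgeListOf F (cu.edges ++ cv.edges ++ p.edges)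

def HasTheta (G : Multigraph V E) (F : Finset E) : Prop :=
  ∃ u v : V, u ≠ v ∧ ∃ p₁ p₂ p₃ : G.Walk u v,
    p₁.IsPath ∧ p₂.IsPath ∧ p₃.IsPath ∧ IsEdgeListOf F (p₁.edges ++ p₂.edges ++ p₃.edges)

theorem DegZeroOrTwoOff.hasDumbbell {w : V} (hreg : G.DegZeroOrTwoOff {w} F)
    (hw : G.deg F w = 4) : G.HasDumbbell F := by
  obtain ⟨c, hc, hcyc⟩ := hreg.exists_cycle (Finset.mem_singleton_self w) (by omega) (by simp)
  have hw' := hc.deg_sdiff_add w (Finset.mem_singleton_self w)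
  simp only [Sym2.count_toMultiset_mk, ↓reduceIte] at hw'
  obtain ⟨c', hc', hcyc'⟩ :=
    hc.degZeroOrTwoOff.exists_cycle (Finset.mem_singleton_self w) (by omega) (by simp)
  exact ⟨w, w, c, c', Walk.nil G w, hcyc, hcyc', Walk.isPath_nil,
    by simpa using hc.isEdgeListOf.append hc'.isEdgeListOf⟩

section Pair

variable {u v : V}

theorem DegZeroOrTwoOff.exists_cycle_right (hreg : G.DegZeroOrTwoOff {u, v} F) (huv : u ≠ v)
    (hu : G.deg F u = 0) (hv : G.deg F v = 2) : ∃ c : G.Walk v v, c.IsBranch {u, v} F ∧ c.IsCycle :=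
  hreg.exists_cycle (by simp) (by omega) (by simpa [huv] using hu)

theorem DegZeroOrTwoOff.exists_path_cycle (hreg : G.DegZeroOrTwoOff {u, v} F) (huv : u ≠ v)
    (hu : G.deg F u = 1) (hv : G.deg F v = 3) :
    ∃ (p : G.Walk u v) (c : G.Walk v v),
      p.IsPath ∧ c.IsCycle ∧ IsEdgeListOf F (p.edges ++ c.edges) := by
  obtain ⟨z, hz, hzu, p, hp, hpath⟩ := hreg.exists_path (by simp) hu
  obtain rfl : v = z := by simpa [hzu, eq_comm] using hz
  have hu' := hp.deg_sdiff_add u (by simp)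
  have hv' := hp.deg_sdiff_add v (by simp)
  simp only [Sym2.count_toMultiset_mk, ↓reduceIte, if_neg huv, if_neg hzu] at hu' hv'
  obtain ⟨c, hc, hcyc⟩ := hp.degZeroOrTwoOff.exists_cycle_right huv (by omega) (by omega)
  exact ⟨p, c, hpath, hcyc, hp.isEdgeListOf.append hc.isEdgeListOf⟩

theorem DegZeroOrTwoOff.cycles_or_paths (hreg : G.DegZeroOrTwoOff {u, v} F) (huv : u ≠ v)
    (hu : G.deg F u = 2) (hv : G.deg F v = 2) :
    (∃ (cu : G.Walk u u) (cv : G.Walk v v),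
      cu.IsCycle ∧ cv.IsCycle ∧ IsEdgeListOf F (cu.edges ++ cv.edges)) ∨
    (∃ p q : G.Walk u v, p.IsPath ∧ q.IsPath ∧ IsEdgeListOf F (p.edges ++ q.edges)) := by
  obtain ⟨z, hz, p, hp⟩ := hreg.exists_branch (x := u) (by simp) (by omega)
  have hu' := hp.deg_sdiff_add u (by simp)
  have hv' := hp.deg_sdiff_add v (by simp)
  obtain rfl | rfl : u = z ∨ v = z := by simpa [eq_comm] using hz
  · simp only [Sym2.count_toMultiset_mk, ↓reduceIte, if_neg huv] at hu' hv'
    obtain ⟨c, hc, hcyc⟩ := hp.degZeroOrTwoOff.exists_cycle_right huv (by omega) (by omega)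
    exact Or.inl ⟨p, c, hp.isCycle (by simp), hcyc, hp.isEdgeListOf.append hc.isEdgeListOf⟩
  · simp only [Sym2.count_toMultiset_mk, ↓reduceIte, if_neg huv, if_neg (Ne.symm huv)]
      at hu' hv'
    obtain ⟨y, hy, hyu, q, hq, hqpath⟩ :=
      hp.degZeroOrTwoOff.exists_path (x := u) (by simp) (by omega)
    obtain rfl : v = y := by simpa [hyu, eq_comm] using hy
    exact Or.inr ⟨p, q, hp.isPath (by simp) (by simp) huv, hqpath,
      hp.isEdgeListOf.append hq.isEdgeListOf⟩

theorem DegZeroOrTwoOff.hasDumbbell_or_hasTheta (hreg : G.DegZeroOrTwoOff {u, v} F)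
    (huv : u ≠ v) (hu : G.deg F u = 3) (hv : G.deg F v = 3) :
    G.HasDumbbell F ∨ G.HasTheta F := by
  obtain ⟨z, hz, p, hp⟩ := hreg.exists_branch (x := u) (by simp) (by omega)
  have hu' := hp.deg_sdiff_add u (by simp)
  have hv' := hp.deg_sdiff_add v (by simp)
  obtain rfl | rfl : u = z ∨ v = z := by simpa [eq_comm] using hz
  · simp only [Sym2.count_toMultiset_mk, ↓reduceIte, if_neg huv] at hu' hv'
    obtain ⟨q, c, hq, hc, hl⟩ := hp.degZeroOrTwoOff.exists_path_cycle huv (by omega) (by omega)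
    refine Or.inl ⟨u, v, p, c, q, hp.isCycle (by simp), hc, hq,
      (hp.isEdgeListOf.append hl).perm ?_⟩
    simpa using List.perm_append_comm.append_left p.edges
  · simp only [Sym2.count_toMultiset_mk, ↓reduceIte, if_neg huv, if_neg (Ne.symm huv)]
      at hu' hv'
    have hpath := hp.isPath (by simp) (by simp) huv
    rcases hp.degZeroOrTwoOff.cycles_or_paths huv (by omega) (by omega) with
      ⟨cu, cv, hcu, hcv, hl⟩ | ⟨q, r, hq, hr, hl⟩
    · exact Or.inl ⟨u, v, cu, cv, p, hcu, hcv, hpath,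
        (hp.isEdgeListOf.append hl).perm List.perm_append_comm⟩
    · exact Or.inr ⟨u, v, huv, p, q, r, hpath, hq, hr,
        by simpa using hp.isEdgeListOf.append hl⟩

end Pair

namespace IsMinimalBinocular

theorem toFinset_eq_of_walks (h : G.IsMinimalBinocular S F) {a₁ b₁ a₂ b₂ a₃ b₃ : V}
    {T : Finset V} {p₁ : G.Walk a₁ b₁} {p₂ : G.Walk a₂ b₂} {p₃ : G.Walk a₃ b₃}
    (hT : {a₁, b₁, a₂, b₂, a₃, b₃} ⊆ T) (hl : IsEdgeListOf F (p₁.edges ++ p₂.edges ++ p₃.edges))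
    (hcard : T.card + (p₁.edges.length - 1) + (p₂.edges.length - 1) + (p₃.edges.length - 1) <
      p₁.edges.length + p₂.edges.length + p₃.edges.length) :
    (p₁.edges ++ p₂.edges ++ p₃.edges).toFinset = F := by
  simp only [Finset.insert_subset_iff, Finset.singleton_subset_iff] at hT
  obtain ⟨ha₁, hb₁, ha₂, hb₂, ha₃, hb₃⟩ := hT
  set K := T ∪ p₁.innerVerts.toFinset ∪ p₂.innerVerts.toFinset ∪ p₃.innerVerts.toFinset
  have hK : G.IsSubgraph K (p₁.edges ++ p₂.edges ++ p₃.edges).toFinset := by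
    rw [List.toFinset_append, List.toFinset_append]
    refine (IsSubgraph.union ?_ ?_).union ?_ <;>
      refine IsSubgraph.mono ?_ (Walk.isSubgraph _ ‹_› ‹_›)
    all_goals intro x; simp only [K, Finset.mem_union]; tauto
  refine h.eq_of_isSubgraph hl.2 hK ?_
  calc K.card ≤ T.card + p₁.innerVerts.toFinset.card + p₂.innerVerts.toFinset.card +
        p₃.innerVerts.toFinset.card := by
        refine (Finset.card_union_le _ _).trans (Nat.add_le_add_right ?_ _)
        refine (Finset.card_union_le _ _).trans (Nat.add_le_add_right ?_ _)
        exact Finset.card_union_le _ _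
    _ ≤ T.card + (p₁.edges.length - 1) + (p₂.edges.length - 1) + (p₃.edges.length - 1) := by
        simp only [← Walk.length_innerVerts]
        gcongr <;> exact List.toFinset_card_le _
    _ < _ := hcard
    _ = _ := by rw [List.toFinset_card_of_nodup hl.1, List.length_append, List.length_append]

theorem eq_of_dumbbell (h : G.IsMinimalBinocular S F) {u v : V} {cu : G.Walk u u}
    {cv : G.Walk v v} {p : G.Walk u v} (hcu : cu.IsCycle) (hcv : cv.IsCycle)
    (hl : IsEdgeListOf F (cu.edges ++ cv.edges ++ p.edges)) :
    (cu.edges ++ cv.edges ++ p.edges).toFinset = F := by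
  have h₁ := List.length_pos_iff.2 hcu.1
  have h₂ := List.length_pos_iff.2 hcv.1
  rcases eq_or_ne u v with rfl | huv
  · refine h.toFinset_eq_of_walks (T := {u}) (by simp) hl ?_
    rw [Finset.card_singleton]
    omega
  · have := p.length_pos_of_ne huv
    have := Finset.card_le_two (a := u) (b := v)
    exact h.toFinset_eq_of_walks (T := {u, v}) (by simp) hl (by omega)

theorem eq_of_theta (h : G.IsMinimalBinocular S F) {u v : V} (huv : u ≠ v)
    {p₁ p₂ p₃ : G.Walk u v} (hl : IsEdgeListOf F (p₁.edges ++ p₂.edges ++ p₃.edges)) :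
    (p₁.edges ++ p₂.edges ++ p₃.edges).toFinset = F := by
  have := p₁.length_pos_of_ne huv
  have := p₂.length_pos_of_ne huv
  have := p₃.length_pos_of_ne huv
  have := Finset.card_pair huv
  exact h.toFinset_eq_of_walks (T := {u, v}) (by simp) hl (by omega)

theorem hasDumbbell_or_hasTheta (h : G.IsMinimalBinocular S F) :
    G.HasDumbbell F ∨ G.HasTheta F := by
  rcases h.deg_cases with ⟨w, hw, hreg⟩ | ⟨u, v, huv, hu, hv, hreg⟩
  · exact Or.inl (hreg.hasDumbbell hw)
  · exact hreg.hasDumbbell_or_hasTheta huv hu hv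

end IsMinimalBinocular

end Multigraph

/-- Let `B = (S, F)` be a minimal binocular in a multigraph `G`. Then
either (a) there are (not necessarily distinct) vertices `u, v`, cycles `C_u` through `u`
and `C_v` through `v` of positive length, and a `u`-`v`-path `P` such that `E(B)` is the
disjoint union of `E(C_u)`, `E(C_v)` and `E(P)`; or (b) there are two distinct vertices
`u ≠ v` such that `E(B)` is the union of the edge sets of three pairwise edge-disjoint
`u`-`v`-paths. -/
theorem minimal_binocular_structure {V E : Type*} [DecidableEq V] [DecidableEq E]
    (G : Multigraph V E) (S : Finset V) (F : Finset E)
    (h : G.IsMinimalBinocular S F) :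
    (∃ (u v : V) (cu : G.Walk u u) (cv : G.Walk v v) (p : G.Walk u v),
        cu.IsCycle ∧ cv.IsCycle ∧ p.IsPath ∧
        (cu.edges ++ cv.edges ++ p.edges).Nodup ∧
        (cu.edges ++ cv.edges ++ p.edges).toFinset = F) ∨
    (∃ u v : V, u ≠ v ∧ ∃ p₁ p₂ p₃ : G.Walk u v,
        p₁.IsPath ∧ p₂.IsPath ∧ p₃.IsPath ∧
        p₁.edges.Disjoint p₂.edges ∧ p₁.edges.Disjoint p₃.edges ∧
        p₂.edges.Disjoint p₃.edges ∧
        (p₁.edges ++ p₂.edges ++ p₃.edges).toFinset = F) := by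
  rcases h.hasDumbbell_or_hasTheta with ⟨u, v, cu, cv, p, hcu, hcv, hp, hl⟩ |
    ⟨u, v, huv, p₁, p₂, p₃, hp₁, hp₂, hp₃, hl⟩
  · exact Or.inl ⟨u, v, cu, cv, p, hcu, hcv, hp, hl.1, h.eq_of_dumbbell hcu hcv hl⟩
  · obtain ⟨h₁₂, h₁₃, h₂₃⟩ := List.disjoint_of_nodup_append₃ hl.1
    exact Or.inr ⟨u, v, huv, p₁, p₂, p₃, hp₁, hp₂, hp₃, h₁₂, h₁₃, h₂₃, h.eq_of_theta huv hl⟩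
end

section
/- Let G be a graph, w: V(G) → {1,2}, A an independent set, and let D ⊆ V(G) satisfy N(V(G)\D, A) ⊆ A\D (i.e., no vertex of A ∩ D has a neighbor outside D). Then every local improvement of A\D in the induced subgraph G[V(G)\D] also constitutes a local improvement of A in G. -/
open scoped Classical

variable {V : Type*}

/-- `N(X, A)`: the vertices of `A` that lie in `X` or are adjacent to some vertex of `X`. -/
noncomputable def nbhd (G : SimpleGraph V) (X A : Finset V) : Finset V :=
  A.filter (fun a => a ∈ X ∨ ∃ x ∈ X, G.Adj x a)

/-- Total weight of a finite vertex set. -/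
noncomputable def wsum (w : V → ℕ) (X : Finset V) : ℕ := ∑ v ∈ X, w v

/-- `X` is a local improvement of `A`: it beats the weight of its neighborhood in `A`,
or ties it with strictly more weight-2 vertices. -/
def IsLocalImprovement (G : SimpleGraph V) (w : V → ℕ) (A X : Finset V) : Prop :=
  wsum w X > wsum w (nbhd G X A) ∨
    (wsum w X = wsum w (nbhd G X A) ∧
      ((nbhd G X A).filter (fun v => w v = 2)).card < (X.filter (fun v => w v = 2)).card)

theorem nbhd_sdiff_eq {G : SimpleGraph V} {X A D : Finset V} (hXD : ∀ x ∈ X, x ∉ D)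
    (hD : ∀ a ∈ A, a ∈ D → ∀ x ∈ X, ¬ G.Adj x a) :
    nbhd G X (A \ D) = nbhd G X A := by
  ext a
  simp only [nbhd, Finset.mem_filter, Finset.mem_sdiff]
  refine ⟨fun ⟨⟨haA, _⟩, h⟩ => ⟨haA, h⟩, fun ⟨haA, h⟩ => ⟨⟨haA, fun haD => ?_⟩, h⟩⟩
  rcases h with haX | ⟨x, hxX, hxa⟩
  · exact hXD a haX haD
  · exact hD a haA haD x hxX hxa

theorem IsLocalImprovement.of_nbhd_eq {G : SimpleGraph V} {w : V → ℕ} {A B X : Finset V}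
    (h : IsLocalImprovement G w A X) (hAB : nbhd G X A = nbhd G X B) :
    IsLocalImprovement G w B X := by
  rwa [IsLocalImprovement, ← hAB]

theorem local_improvement_lifts_general (G : SimpleGraph V) (w : V → ℕ)
    (A D X : Finset V)
    (hXD : ∀ x ∈ X, x ∉ D)
    (hD : ∀ a ∈ A, a ∈ D → ∀ u, u ∉ D → ¬ G.Adj u a)
    (himp : IsLocalImprovement G w (A \ D) X) :
    IsLocalImprovement G w A X :=
  himp.of_nbhd_eq <| nbhd_sdiff_eq hXD fun a ha haD x hx => hD a ha haD x (hXD x hx)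

/-- Let `G` be a graph, `w : V → {1,2}`, `A` an independent set, and
`D ⊆ V` with `N(V \ D, A) ⊆ A \ D`, i.e. no vertex of `A ∩ D` has a neighbor outside
`D`.  Then every local improvement of `A \ D` in the induced subgraph `G[V \ D]`
(equivalently: every independent `X` avoiding `D` improving `A \ D`, with neighborhoods
taken in `G`, which agree with those in `G[V \ D]`) is also a local improvement of `A`
in `G`. -/
theorem local_improvement_lifts (G : SimpleGraph V) (w : V → ℕ)
    (hw : ∀ v, w v = 1 ∨ w v = 2)
    (A D X : Finset V)
    (hA : ∀ x ∈ A, ∀ y ∈ A, ¬ G.Adj x y)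
    (hX : ∀ x ∈ X, ∀ y ∈ X, ¬ G.Adj x y)
    (hXD : ∀ x ∈ X, x ∉ D)
    (hD : ∀ a ∈ A, a ∈ D → ∀ u, u ∉ D → ¬ G.Adj u a)
    (himp : IsLocalImprovement G w (A \ D) X) :
    IsLocalImprovement G w A X :=
  local_improvement_lifts_general G w A D X hXD hD himp
end

section
/- Let G be a graph, w: V(G) → {1,2}, A ⊆ V(G) independent, τ > 0, and let B be an improving binocular in the search graph S_τ(G,w,A). Then N(W(B), A) ⊆ U(B) and w(W(B)) > w(U(B)); in particular, W(B) is a local improvement of A. -/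
open scoped Classical

variable {V : Type*}

/-!
A vertex of `A` adjacent to `W(e)` lies either in `U(e)` or in the edge `e = N(W(e), A \ U(e))`,
so `N(W(𝓑), A) ⊆ U(𝓑)`. For the weights: the endpoints of `𝓑` are fewer than its edges and all
have weight 2, so together they weigh at most `2 (|E₁| + |E₂|) - 2`. The sets `W(e)`, `e ∈ E₂`, are
disjoint and each outweighs `U(e)` by 2, and condition (ii) says the part of `W(𝓑)` coming only
from loops outweighs the corresponding part of `U(𝓑)` by `2 |E₁|`. Adding up,
`w(U(𝓑)) + 2 ≤ w(W(𝓑))`.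
-/

open Finset

section
variable {ι : Type*}

lemma nbhd_biUnion (G : SimpleGraph V) (s : Finset ι) (X : ι → Finset V) (A : Finset V) :
    nbhd G (s.biUnion X) A = s.biUnion fun i => nbhd G (X i) A := by
  ext a
  simp only [nbhd, mem_filter, mem_biUnion]
  grind

lemma nbhd_subset_nbhd_sdiff_union (G : SimpleGraph V) (X A U : Finset V) :
    nbhd G X A ⊆ nbhd G X (A \ U) ∪ U := by
  intro a
  simp only [nbhd, mem_filter, mem_union, mem_sdiff]
  grind

lemma wsum_union_le (w : V → ℕ) (X Y : Finset V) : wsum w (X ∪ Y) ≤ wsum w X + wsum w Y := by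
  rw [wsum, wsum, wsum, ← sum_union_inter]
  exact Nat.le_add_right _ _

lemma wsum_union_eq_add_sdiff (w : V → ℕ) (X Y : Finset V) :
    wsum w (X ∪ Y) = wsum w X + wsum w (Y \ X) := by
  rw [wsum, wsum, wsum, ← sum_union disjoint_sdiff, union_sdiff_self_eq_union]

lemma wsum_biUnion_le (w : V → ℕ) (s : Finset ι) (X : ι → Finset V) :
    wsum w (s.biUnion X) ≤ ∑ i ∈ s, wsum w (X i) := by
  rw [← sup_eq_biUnion]
  exact s.apply_sup_le_sum (by simp [wsum]) (wsum_union_le w _ _)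

lemma wsum_eq_two_mul_card {w : V → ℕ} {X : Finset V} (h : ∀ v ∈ X, w v = 2) :
    wsum w X = 2 * X.card := by
  rw [wsum, sum_congr rfl h, sum_const, smul_eq_mul, mul_comm]

lemma wsum_biUnion_union_le (w : V → ℕ) (E1 E2 : Finset ι) (e U : ι → Finset V) :
    wsum w ((E1 ∪ E2).biUnion fun i => e i ∪ U i) ≤
      wsum w ((E1 ∪ E2).biUnion e) + ∑ i ∈ E2, wsum w (U i) +
        wsum w (E1.biUnion U \ E2.biUnion U) := by
  calc wsum w ((E1 ∪ E2).biUnion fun i => e i ∪ U i)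
      ≤ wsum w ((E1 ∪ E2).biUnion e) + wsum w ((E1 ∪ E2).biUnion U) := by
        rw [biUnion_union]
        exact wsum_union_le w _ _
    _ = wsum w ((E1 ∪ E2).biUnion e) + (wsum w (E2.biUnion U) +
          wsum w (E1.biUnion U \ E2.biUnion U)) := by
        congr 1
        rw [union_biUnion, union_comm, wsum_union_eq_add_sdiff]
    _ ≤ _ := by
        rw [← add_assoc]
        gcongr
        exact wsum_biUnion_le w E2 U

lemma wsum_biUnion_eq_of_pairwiseDisjoint (w : V → ℕ) (E1 E2 : Finset ι) (W : ι → Finset V)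
    (hW : (E2 : Set ι).PairwiseDisjoint W) :
    wsum w ((E1 ∪ E2).biUnion W) =
      ∑ i ∈ E2, wsum w (W i) + wsum w (E1.biUnion W \ E2.biUnion W) := by
  rw [union_biUnion, union_comm, wsum_union_eq_add_sdiff, wsum, sum_biUnion hW]
  rfl

theorem wsum_biUnion_lt_of_improving (w : V → ℕ) (E1 E2 : Finset ι) (e U W : ι → Finset V)
    (he : ∀ i ∈ E1 ∪ E2, ∀ v ∈ e i, w v = 2)
    (hbin : ((E1 ∪ E2).biUnion e).card < E1.card + E2.card)
    (hweight : ∀ i ∈ E2, wsum w (U i) + 2 = wsum w (W i))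
    (hW : (E2 : Set ι).PairwiseDisjoint W)
    (hii : wsum w (E1.biUnion U \ E2.biUnion U) + 2 * E1.card
             ≤ wsum w (E1.biUnion W \ E2.biUnion W)) :
    wsum w ((E1 ∪ E2).biUnion fun i => e i ∪ U i) < wsum w ((E1 ∪ E2).biUnion W) := by
  have hends : wsum w ((E1 ∪ E2).biUnion e) = 2 * ((E1 ∪ E2).biUnion e).card :=
    wsum_eq_two_mul_card fun v hv => by
      obtain ⟨i, hi, hv⟩ := mem_biUnion.1 hv
      exact he i hi v hv
  have htwo : ∑ i ∈ E2, wsum w (W i) = ∑ i ∈ E2, wsum w (U i) + 2 * E2.card := by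
    rw [← sum_congr rfl hweight, sum_add_distrib, sum_const, smul_eq_mul, mul_comm]
  have hU := wsum_biUnion_union_le w E1 E2 e U
  rw [wsum_biUnion_eq_of_pairwiseDisjoint w E1 E2 W hW]
  omega

end

theorem improving_binocular_is_improvement_general {ι : Type*}
    (G : SimpleGraph V) (w : V → ℕ)
    (A : Finset V)
    (E1 E2 : Finset ι)
    (U W : ι → Finset V)
    -- each (U ε, W ε) is an edge-inducing pair:
    (hweight : ∀ ε ∈ E1 ∪ E2, wsum w (U ε) + 2 = wsum w (W ε))
    (hedgeW2 : ∀ ε ∈ E1 ∪ E2, ∀ a ∈ nbhd G (W ε) (A \ U ε), w a = 2)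
    -- 𝓑 is a binocular: strictly more edges than vertices:
    (hbin : ((E1 ∪ E2).biUnion (fun ε => nbhd G (W ε) (A \ U ε))).card
              < E1.card + E2.card)
    -- 𝓑 is improving:
    (hWdisj : ∀ ε₁ ∈ E2, ∀ ε₂ ∈ E2, ε₁ ≠ ε₂ → Disjoint (W ε₁) (W ε₂))
    (hii : wsum w ((E1.biUnion U) \ (E2.biUnion U)) + 2 * E1.card
             ≤ wsum w ((E1.biUnion W) \ (E2.biUnion W))) :
    nbhd G ((E1 ∪ E2).biUnion W) A ⊆
        (E1 ∪ E2).biUnion (fun ε => nbhd G (W ε) (A \ U ε) ∪ U ε) ∧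
    wsum w ((E1 ∪ E2).biUnion (fun ε => nbhd G (W ε) (A \ U ε) ∪ U ε))
        < wsum w ((E1 ∪ E2).biUnion W) ∧
    IsLocalImprovement G w A ((E1 ∪ E2).biUnion W) := by
  have hcover : nbhd G ((E1 ∪ E2).biUnion W) A ⊆
      (E1 ∪ E2).biUnion (fun ε => nbhd G (W ε) (A \ U ε) ∪ U ε) := by
    rw [nbhd_biUnion]
    exact biUnion_mono fun ε _ => nbhd_subset_nbhd_sdiff_union G (W ε) A (U ε)
  have hlt := wsum_biUnion_lt_of_improving w E1 E2 (fun ε => nbhd G (W ε) (A \ U ε)) U W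
    hedgeW2 hbin (fun ε hε => hweight ε (mem_union_right _ hε)) hWdisj hii
  exact ⟨hcover, hlt, Or.inl ((sum_le_sum_of_subset hcover).trans_lt hlt)⟩

/-- Let `A` be independent in `(G, w)` with weights in `{1, 2}` and let
`𝓑` be an improving binocular in the search graph `S_τ(G, w, A)`.  We encode `𝓑` by a
finite family of edges indexed by `E1 ∪ E2` (loops `E1` and two-endpoint edges `E2`),
each edge `ε` arising from an edge-inducing pair `(U ε, W ε)`; the edge associated with
`ε` is `e(ε) = N(W ε, A \ U ε)`.  Then `N(W(𝓑), A) ⊆ U(𝓑)` and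
`w(W(𝓑)) > w(U(𝓑))`; in particular `W(𝓑)` is a local improvement of `A`. -/
theorem improving_binocular_is_improvement {ι : Type*}
    (G : SimpleGraph V) (w : V → ℕ) (τ : ℕ) (hτ : 0 < τ)
    (hw : ∀ v, w v = 1 ∨ w v = 2)
    (A : Finset V) (hA : ∀ x ∈ A, ∀ y ∈ A, ¬ G.Adj x y)
    (E1 E2 : Finset ι) (hE : Disjoint E1 E2)
    (U W : ι → Finset V)
    -- each (U ε, W ε) is an edge-inducing pair:
    (hUA : ∀ ε ∈ E1 ∪ E2, U ε ⊆ A)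
    (hWA : ∀ ε ∈ E1 ∪ E2, ∀ x ∈ W ε, x ∉ A)
    (hWind : ∀ ε ∈ E1 ∪ E2, ∀ x ∈ W ε, ∀ y ∈ W ε, ¬ G.Adj x y)
    (hsize : ∀ ε ∈ E1 ∪ E2, (U ε).card ≤ τ ∧ (W ε).card ≤ τ)
    (hweight : ∀ ε ∈ E1 ∪ E2, wsum w (U ε) + 2 = wsum w (W ε))
    (hedgeW2 : ∀ ε ∈ E1 ∪ E2, ∀ a ∈ nbhd G (W ε) (A \ U ε), w a = 2)
    (hloop : ∀ ε ∈ E1, (nbhd G (W ε) (A \ U ε)).card = 1)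
    (htwo : ∀ ε ∈ E2, (nbhd G (W ε) (A \ U ε)).card = 2)
    -- 𝓑 is a binocular: strictly more edges than vertices:
    (hbin : ((E1 ∪ E2).biUnion (fun ε => nbhd G (W ε) (A \ U ε))).card
              < E1.card + E2.card)
    -- 𝓑 is improving:
    (hWdisj : ∀ ε₁ ∈ E2, ∀ ε₂ ∈ E2, ε₁ ≠ ε₂ → Disjoint (W ε₁) (W ε₂))
    (hii : wsum w ((E1.biUnion U) \ (E2.biUnion U)) + 2 * E1.card
             ≤ wsum w ((E1.biUnion W) \ (E2.biUnion W)))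
    (hWBind : ∀ x ∈ (E1 ∪ E2).biUnion W, ∀ y ∈ (E1 ∪ E2).biUnion W, ¬ G.Adj x y) :
    nbhd G ((E1 ∪ E2).biUnion W) A ⊆
        (E1 ∪ E2).biUnion (fun ε => nbhd G (W ε) (A \ U ε) ∪ U ε) ∧
    wsum w ((E1 ∪ E2).biUnion (fun ε => nbhd G (W ε) (A \ U ε) ∪ U ε))
        < wsum w ((E1 ∪ E2).biUnion W) ∧
    IsLocalImprovement G w A ((E1 ∪ E2).biUnion W) :=
  improving_binocular_is_improvement_general G w A E1 E2 U W hweight hedgeW2 hbin hWdisj hii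
end
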